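/- Let C₀, C ≥ 0. Let (Z, μ) be a measure space and r : Z → [0,∞) a measurable function such that μ(r⁻¹(A)) ≤ C₀ ∫_A ρ dρ for every measurable A ⊆ [0,∞). Let h : Z × ℂ → ℂ be measurable with |h(z,v)| ≤ C|v|(1 + r(z))⁻³ for all z ∈ Z and all v ∈ ℂ with |v| ≤ r(z) + 1. For s > 0 and z ∈ Z set I₂(s,z) := ∫_{{v ∈ ℂ : |v| ≤ r(z)+1}} s⁻¹ e^{−|v|²/s} h(z,v) dA(v). Then there is a constant C′ depending only on C and C₀ such that for every T > 1, ∫₀^T (1/s) ∫_{{z : r(z) ≤ √T}} |I₂(s,z)| dμ(z) ds ≤ C′(log T + 1). -/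

import Mathlib

open MeasureTheory Real Set

set_option linter.unusedVariables false

lemma exp_aux {a t : ℝ} (ha : 0 < a) (ht : 0 ≤ t) :
    t * Real.exp (-(a⁻¹ * t ^ 2)) ≤ Real.sqrt a := by
  have hE : (0:ℝ) < Real.exp (a⁻¹ * t ^ 2) := Real.exp_pos _
  have h1 : a⁻¹ * t ^ 2 + 1 ≤ Real.exp (a⁻¹ * t ^ 2) := by
    simpa using Real.add_one_le_exp (a⁻¹ * t ^ 2)
  have hsa : Real.sqrt a ^ 2 = a := Real.sq_sqrt ha.le
  have hsa' : 0 < Real.sqrt a := Real.sqrt_pos.2 ha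
  have ha' : a * a⁻¹ = 1 := mul_inv_cancel₀ ha.ne'
  rw [Real.exp_neg, mul_inv_le_iff₀ hE]
  have h2 : Real.sqrt a * (a⁻¹ * t ^ 2 + 1) ≤ Real.sqrt a * Real.exp (a⁻¹ * t ^ 2) :=
    mul_le_mul_of_nonneg_left h1 hsa'.le
  nlinarith [sq_nonneg (t - Real.sqrt a), sq_nonneg t]

lemma gauss_int {b : ℝ} (hb : 0 < b) :
    Integrable (fun v : ℂ => Real.exp (-b * ‖v‖ ^ 2)) := by
  have h := GaussianFourier.integrable_cexp_neg_mul_sq_norm_add (V := ℂ)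
    (b := (b : ℂ)) (by simpa using hb) 0 0
  refine h.norm.congr (Filter.Eventually.of_forall fun v => ?_)
  simp [Complex.norm_exp, ← Complex.ofReal_pow]

lemma gauss_val {b : ℝ} (hb : 0 < b) :
    ∫ v : ℂ, Real.exp (-b * ‖v‖ ^ 2) = π / b := by
  have h := GaussianFourier.integral_rexp_neg_mul_sq_norm (V := ℂ) hb
  rw [h, Complex.finrank_real_complex]
  norm_num

lemma exp_aux2 {s t : ℝ} (hs : 0 < s) (ht : 0 ≤ t) :
    Real.exp (-t ^ 2 / s) * t ≤ Real.sqrt (2 * s) * Real.exp (-(2 * s)⁻¹ * t ^ 2) := by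
  have h2s : 0 < 2 * s := by linarith
  have key := exp_aux h2s ht
  have hsplit : Real.exp (-t ^ 2 / s)
      = Real.exp (-((2 * s)⁻¹ * t ^ 2)) * Real.exp (-((2 * s)⁻¹ * t ^ 2)) := by
    rw [← Real.exp_add]; congr 1; field_simp; ring
  have hE : (0:ℝ) ≤ Real.exp (-((2 * s)⁻¹ * t ^ 2)) := (Real.exp_pos _).le
  calc Real.exp (-t ^ 2 / s) * t
      = (t * Real.exp (-((2 * s)⁻¹ * t ^ 2))) * Real.exp (-((2 * s)⁻¹ * t ^ 2)) := by
        rw [hsplit]; ring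
    _ ≤ Real.sqrt (2 * s) * Real.exp (-((2 * s)⁻¹ * t ^ 2)) :=
        mul_le_mul_of_nonneg_right key hE
    _ = Real.sqrt (2 * s) * Real.exp (-(2 * s)⁻¹ * t ^ 2) := by rw [neg_mul]

lemma J_le {s R : ℝ} (hs : 0 < s) (hR : 1 ≤ R) :
    ∫ v in Metric.closedBall (0:ℂ) R, Real.exp (-‖v‖ ^ 2 / s) * ‖v‖
      ≤ min (4 * R ^ 3) (9 * (s * Real.sqrt s)) := by
  have hR0 : (0:ℝ) ≤ R := le_trans zero_le_one hR
  have hcont : Continuous (fun v : ℂ => Real.exp (-‖v‖ ^ 2 / s) * ‖v‖) := by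
    fun_prop
  have hJint : IntegrableOn (fun v : ℂ => Real.exp (-‖v‖ ^ 2 / s) * ‖v‖)
      (Metric.closedBall 0 R) :=
    hcont.continuousOn.integrableOn_compact (isCompact_closedBall 0 R)
  refine le_min ?_ ?_
  · have h1 : ∫ v in Metric.closedBall (0:ℂ) R, Real.exp (-‖v‖ ^ 2 / s) * ‖v‖
        ≤ ∫ _v in Metric.closedBall (0:ℂ) R, R := by
      refine setIntegral_mono_on hJint
        (integrableOn_const measure_closedBall_lt_top.ne) measurableSet_closedBall ?_
      intro v hv
      have hv' : ‖v‖ ≤ R := mem_closedBall_zero_iff.1 hv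
      have h2 : Real.exp (-‖v‖ ^ 2 / s) ≤ Real.exp 0 := by
        apply Real.exp_le_exp.2
        apply div_nonpos_of_nonpos_of_nonneg (neg_nonpos.2 (by positivity)) hs.le
      rw [Real.exp_zero] at h2
      nlinarith [norm_nonneg v, Real.exp_pos (-‖v‖ ^ 2 / s)]
    have hvol : (volume (Metric.closedBall (0:ℂ) R)).toReal = R ^ 2 * π := by
      rw [Complex.volume_closedBall, ENNReal.toReal_mul, ENNReal.toReal_pow,
        ENNReal.toReal_ofReal hR0, ENNReal.coe_toReal, NNReal.coe_real_pi]
    rw [setIntegral_const, measureReal_def, hvol, smul_eq_mul] at h1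
    nlinarith [Real.pi_le_four, pow_nonneg hR0 3]
  · set b : ℝ := (2 * s)⁻¹ with hbdef
    have hb : 0 < b := by positivity
    have hint : Integrable (fun v : ℂ => Real.sqrt (2 * s) * Real.exp (-b * ‖v‖ ^ 2)) :=
      (gauss_int hb).const_mul _
    have h1 : ∫ v in Metric.closedBall (0:ℂ) R, Real.exp (-‖v‖ ^ 2 / s) * ‖v‖
        ≤ ∫ v in Metric.closedBall (0:ℂ) R, Real.sqrt (2 * s) * Real.exp (-b * ‖v‖ ^ 2) :=
      setIntegral_mono_on hJint hint.integrableOn measurableSet_closedBall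
        (fun v _ => exp_aux2 hs (norm_nonneg v))
    have h2 : ∫ v in Metric.closedBall (0:ℂ) R, Real.sqrt (2 * s) * Real.exp (-b * ‖v‖ ^ 2)
        ≤ ∫ v : ℂ, Real.sqrt (2 * s) * Real.exp (-b * ‖v‖ ^ 2) :=
      setIntegral_le_integral hint (Filter.Eventually.of_forall fun v => by positivity)
    have h3 : ∫ v : ℂ, Real.sqrt (2 * s) * Real.exp (-b * ‖v‖ ^ 2)
        = Real.sqrt (2 * s) * (π / b) := by
      rw [integral_const_mul, gauss_val hb]
    have h4 : Real.sqrt (2 * s) * (π / b) ≤ 9 * (s * Real.sqrt s) := by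
      have hsq2 : Real.sqrt (2 * s) = Real.sqrt 2 * Real.sqrt s := Real.sqrt_mul (by norm_num) s
      have h2' : Real.sqrt 2 ^ 2 = 2 := Real.sq_sqrt (by norm_num)
      have h2n : (0:ℝ) ≤ Real.sqrt 2 := Real.sqrt_nonneg 2
      have hs2 : Real.sqrt 2 ≤ 1.415 := by nlinarith
      have hpi : π < 3.15 := Real.pi_lt_d2
      have hdb : π / b = π * (2 * s) := by
        rw [hbdef, div_eq_mul_inv, inv_inv]
      rw [hsq2, hdb]
      have hss : (0:ℝ) ≤ Real.sqrt s := Real.sqrt_nonneg s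
      nlinarith [mul_le_mul hs2 hpi.le Real.pi_pos.le (by norm_num : (0:ℝ) ≤ 1.415), mul_nonneg hs.le hss]
    linarith

lemma inner_bound {C s rz : ℝ} (hC : 0 ≤ C) (hs : 0 < s) (hrz : 0 ≤ rz) (g : ℂ → ℂ)
    (hb : ∀ v : ℂ, ‖v‖ ≤ rz + 1 → ‖g v‖ ≤ C * ‖v‖ * ((1 + rz) ^ 3)⁻¹) :
    ‖∫ v in {v : ℂ | ‖v‖ ≤ rz + 1}, (s⁻¹ * Real.exp (-‖v‖ ^ 2 / s)) • g v‖ ≤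
      C * ((1 + rz) ^ 3)⁻¹ * s⁻¹ * min (4 * (rz + 1) ^ 3) (9 * (s * Real.sqrt s)) := by
  have h1r : (0:ℝ) < 1 + rz := by linarith
  have hset : {v : ℂ | ‖v‖ ≤ rz + 1} = Metric.closedBall (0:ℂ) (rz + 1) := by
    ext v; simp [mem_closedBall_zero_iff]
  rw [hset]
  set K : ℝ := C * ((1 + rz) ^ 3)⁻¹ * s⁻¹ with hK
  have hK0 : 0 ≤ K := by positivity
  have hmaj : IntegrableOn (fun v : ℂ => K * (Real.exp (-‖v‖ ^ 2 / s) * ‖v‖))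
      (Metric.closedBall 0 (rz + 1)) := by
    have : Continuous (fun v : ℂ => K * (Real.exp (-‖v‖ ^ 2 / s) * ‖v‖)) := by fun_prop
    exact this.continuousOn.integrableOn_compact (isCompact_closedBall _ _)
  have hpt : ∀ᵐ v ∂(volume.restrict (Metric.closedBall (0:ℂ) (rz + 1))),
      ‖(s⁻¹ * Real.exp (-‖v‖ ^ 2 / s)) • g v‖ ≤ K * (Real.exp (-‖v‖ ^ 2 / s) * ‖v‖) := by
    refine (ae_restrict_mem measurableSet_closedBall).mono (fun v hv => ?_)
    have hv' : ‖v‖ ≤ rz + 1 := mem_closedBall_zero_iff.1 hv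
    rw [norm_smul]
    have ha : (0:ℝ) < s⁻¹ * Real.exp (-‖v‖ ^ 2 / s) := by positivity
    have habs : ‖s⁻¹ * Real.exp (-‖v‖ ^ 2 / s)‖ = s⁻¹ * Real.exp (-‖v‖ ^ 2 / s) := by
      rw [Real.norm_eq_abs, abs_of_pos ha]
    rw [habs]
    calc s⁻¹ * Real.exp (-‖v‖ ^ 2 / s) * ‖g v‖
        ≤ s⁻¹ * Real.exp (-‖v‖ ^ 2 / s) * (C * ‖v‖ * ((1 + rz) ^ 3)⁻¹) :=
          mul_le_mul_of_nonneg_left (hb v hv') ha.le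
      _ = K * (Real.exp (-‖v‖ ^ 2 / s) * ‖v‖) := by rw [hK]; ring
  have hmain := norm_integral_le_of_norm_le hmaj hpt
  have heq : ∫ v in Metric.closedBall (0:ℂ) (rz + 1), K * (Real.exp (-‖v‖ ^ 2 / s) * ‖v‖)
      = K * ∫ v in Metric.closedBall (0:ℂ) (rz + 1), Real.exp (-‖v‖ ^ 2 / s) * ‖v‖ :=
    integral_const_mul _ _
  calc ‖∫ v in Metric.closedBall (0:ℂ) (rz + 1), (s⁻¹ * Real.exp (-‖v‖ ^ 2 / s)) • g v‖
      ≤ K * ∫ v in Metric.closedBall (0:ℂ) (rz + 1), Real.exp (-‖v‖ ^ 2 / s) * ‖v‖ := by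
        rw [← heq]; exact hmain
    _ ≤ K * min (4 * (rz + 1) ^ 3) (9 * (s * Real.sqrt s)) :=
        mul_le_mul_of_nonneg_left (J_le hs (by linarith)) hK0

lemma int1 {a : ℝ} (ha : 0 < a) :
    ∫⁻ s in Set.Ioc (0:ℝ) a, ENNReal.ofReal (s ^ (-(1/2) : ℝ)) = ENNReal.ofReal (2 * Real.sqrt a) := by
  have hint : IntegrableOn (fun s : ℝ => s ^ (-(1/2) : ℝ)) (Set.Ioc 0 a) := by
    rw [← intervalIntegrable_iff_integrableOn_Ioc_of_le ha.le]
    exact intervalIntegral.intervalIntegrable_rpow' (by norm_num)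
  rw [← ofReal_integral_eq_lintegral_ofReal hint
    ((ae_restrict_mem measurableSet_Ioc).mono fun s hs => Real.rpow_nonneg hs.1.le _)]
  congr 1
  rw [← intervalIntegral.integral_of_le ha.le, integral_rpow (Or.inl (by norm_num))]
  rw [Real.zero_rpow (by norm_num : (-(1/2):ℝ) + 1 ≠ 0)]
  rw [show (-(1/2):ℝ) + 1 = 1/2 by norm_num, ← Real.sqrt_eq_rpow]
  ring

lemma int2 {a : ℝ} (ha : 0 < a) :
    ∫⁻ s in Set.Ioi a, ENNReal.ofReal (s ^ (-2 : ℝ)) = ENNReal.ofReal ((a ^ 2)⁻¹ * a) := by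
  have hint : IntegrableOn (fun s : ℝ => s ^ (-2 : ℝ)) (Set.Ioi a) :=
    integrableOn_Ioi_rpow_of_lt (by norm_num) ha
  rw [← ofReal_integral_eq_lintegral_ofReal hint
    ((ae_restrict_mem measurableSet_Ioi).mono fun s hs => Real.rpow_nonneg (ha.trans hs).le _)]
  congr 1
  rw [integral_Ioi_rpow_of_lt (by norm_num) ha]
  rw [show (-2:ℝ) + 1 = -1 by norm_num, Real.rpow_neg_one]
  field_simp

lemma int3 {b : ℝ} (hb : 1 ≤ b) :
    ∫⁻ ρ in Set.Ioc (1:ℝ) b, ENNReal.ofReal ρ⁻¹ = ENNReal.ofReal (Real.log b) := by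
  have hint : IntegrableOn (fun ρ : ℝ => ρ⁻¹) (Set.Ioc 1 b) := by
    refine ((ContinuousOn.integrableOn_compact isCompact_Icc ?_)).mono_set Set.Ioc_subset_Icc_self
    exact ContinuousOn.inv₀ continuousOn_id (fun x hx => by
      have := hx.1; intro h0; rw [h0] at this; linarith)
  rw [← ofReal_integral_eq_lintegral_ofReal hint
    ((ae_restrict_mem measurableSet_Ioc).mono fun ρ hρ => by
      have : (0:ℝ) < ρ := lt_of_lt_of_le zero_lt_one hρ.1.le
      positivity)]
  congr 1
  rw [← intervalIntegral.integral_of_le hb, integral_inv (by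
    rw [Set.uIcc_of_le hb]; intro hmem; exact absurd hmem.1 (by norm_num))]
  simp

lemma s_integral {R T : ℝ} (hR : 1 ≤ R) (hT : 0 < T) :
    ∫⁻ s in Set.Ioo (0:ℝ) T,
      ENNReal.ofReal (s⁻¹ * (s⁻¹ * min (4 * R ^ 3) (9 * (s * Real.sqrt s))))
      ≤ ENNReal.ofReal (22 * R) := by
  have hR0 : (0:ℝ) < R := lt_of_lt_of_le zero_lt_one hR
  have hR2 : (0:ℝ) < R ^ 2 := by positivity
  have hsub : Set.Ioo (0:ℝ) T ⊆ Set.Ioc 0 (R ^ 2) ∪ Set.Ioi (R ^ 2) := by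
    intro s hs
    rcases le_or_gt s (R ^ 2) with h | h
    · exact Or.inl ⟨hs.1, h⟩
    · exact Or.inr h
  calc ∫⁻ s in Set.Ioo (0:ℝ) T,
        ENNReal.ofReal (s⁻¹ * (s⁻¹ * min (4 * R ^ 3) (9 * (s * Real.sqrt s))))
      ≤ ∫⁻ s in Set.Ioc (0:ℝ) (R ^ 2) ∪ Set.Ioi (R ^ 2),
        ENNReal.ofReal (s⁻¹ * (s⁻¹ * min (4 * R ^ 3) (9 * (s * Real.sqrt s)))) :=
        lintegral_mono_set hsub
    _ ≤ (∫⁻ s in Set.Ioc (0:ℝ) (R ^ 2),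
        ENNReal.ofReal (s⁻¹ * (s⁻¹ * min (4 * R ^ 3) (9 * (s * Real.sqrt s))))) +
        ∫⁻ s in Set.Ioi (R ^ 2),
        ENNReal.ofReal (s⁻¹ * (s⁻¹ * min (4 * R ^ 3) (9 * (s * Real.sqrt s)))) := by
        rw [← lintegral_add_measure]
        exact lintegral_mono' (Measure.restrict_union_le _ _) le_rfl
    _ ≤ (∫⁻ s in Set.Ioc (0:ℝ) (R ^ 2), ENNReal.ofReal 9 * ENNReal.ofReal (s ^ (-(1/2) : ℝ))) +
        ∫⁻ s in Set.Ioi (R ^ 2), ENNReal.ofReal (4 * R ^ 3) * ENNReal.ofReal (s ^ (-2 : ℝ)) := by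
        gcongr ?_ + ?_
        · refine lintegral_mono_ae ((ae_restrict_mem measurableSet_Ioc).mono fun s hs => ?_)
          have hs0 : (0:ℝ) < s := hs.1
          rw [← ENNReal.ofReal_mul (by norm_num)]
          refine ENNReal.ofReal_le_ofReal ?_
          have hrp : s ^ (-(1/2) : ℝ) = Real.sqrt s * s⁻¹ := by
            rw [show (-(1/2):ℝ) = 1/2 + (-1) by norm_num, Real.rpow_add hs0,
              Real.rpow_neg_one, ← Real.sqrt_eq_rpow]
          calc s⁻¹ * (s⁻¹ * min (4 * R ^ 3) (9 * (s * Real.sqrt s)))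
              ≤ s⁻¹ * (s⁻¹ * (9 * (s * Real.sqrt s))) := by
                have h1 : (0:ℝ) ≤ s⁻¹ := by positivity
                exact mul_le_mul_of_nonneg_left
                  (mul_le_mul_of_nonneg_left (min_le_right _ _) h1) h1
            _ = 9 * (s ^ (-(1/2) : ℝ)) := by
                rw [hrp]; field_simp
        · refine lintegral_mono_ae ((ae_restrict_mem measurableSet_Ioi).mono fun s hs => ?_)
          have hs0 : (0:ℝ) < s := lt_trans hR2 hs
          rw [← ENNReal.ofReal_mul (by positivity)]
          refine ENNReal.ofReal_le_ofReal ?_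
          have hrp : s ^ (-2 : ℝ) = s⁻¹ * s⁻¹ := by
            rw [show (-2:ℝ) = (-1) + (-1) by norm_num, Real.rpow_add hs0, Real.rpow_neg_one]
          calc s⁻¹ * (s⁻¹ * min (4 * R ^ 3) (9 * (s * Real.sqrt s)))
              ≤ s⁻¹ * (s⁻¹ * (4 * R ^ 3)) := by
                have h1 : (0:ℝ) ≤ s⁻¹ := by positivity
                exact mul_le_mul_of_nonneg_left
                  (mul_le_mul_of_nonneg_left (min_le_left _ _) h1) h1
            _ = 4 * R ^ 3 * s ^ (-2 : ℝ) := by rw [hrp]; ring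
    _ = ENNReal.ofReal 9 * ENNReal.ofReal (2 * Real.sqrt (R ^ 2)) +
        ENNReal.ofReal (4 * R ^ 3) * ENNReal.ofReal (((R ^ 2) ^ 2)⁻¹ * R ^ 2) := by
        rw [lintegral_const_mul' _ _ ENNReal.ofReal_ne_top,
          lintegral_const_mul' _ _ ENNReal.ofReal_ne_top, int1 hR2, int2 hR2]
    _ ≤ ENNReal.ofReal (22 * R) := by
        rw [← ENNReal.ofReal_mul (by norm_num), ← ENNReal.ofReal_mul (by positivity),
          ← ENNReal.ofReal_add (by positivity) (by positivity)]
        refine ENNReal.ofReal_le_ofReal ?_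
        rw [Real.sqrt_sq hR0.le]
        have : (4 * R ^ 3) * (((R ^ 2) ^ 2)⁻¹ * R ^ 2) = 4 * R := by
          field_simp
        rw [this]; linarith

lemma z_integral {C₀ : ℝ} (hC₀ : 0 ≤ C₀) {Z : Type} [MeasurableSpace Z] (μ : Measure Z)
    (r : Z → ℝ) (hr : Measurable r) (hr0 : ∀ z, 0 ≤ r z)
    (hμ : ∀ A : Set ℝ, MeasurableSet A → A ⊆ Set.Ici 0 →
      μ (r ⁻¹' A) ≤ ENNReal.ofReal C₀ * ∫⁻ ρ in A, ENNReal.ofReal ρ)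
    {b : ℝ} (hb : 1 ≤ b) :
    ∫⁻ z in {z : Z | r z ≤ b}, ENNReal.ofReal (((1 + r z) ^ 2)⁻¹) ∂μ
      ≤ ENNReal.ofReal C₀ * ENNReal.ofReal (1 + Real.log b) := by
  set g : ℝ → ENNReal := fun ρ => ENNReal.ofReal (((1 + ρ) ^ 2)⁻¹) with hg
  have hgm : Measurable g := by
    apply ENNReal.measurable_ofReal.comp
    fun_prop
  set B : Set ℝ := Set.Icc 0 b with hB
  have hBm : MeasurableSet B := measurableSet_Icc
  have hpre : {z : Z | r z ≤ b} = r ⁻¹' B := by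
    ext z; simp [hB, Set.mem_preimage, hr0 z]
  have hmap : Measure.map r μ ≤
      ENNReal.ofReal C₀ • (volume.withDensity fun ρ => ENNReal.ofReal ρ) := by
    refine Measure.le_iff.2 fun A hA => ?_
    rw [Measure.map_apply hr hA]
    have hAeq : r ⁻¹' A = r ⁻¹' (A ∩ Set.Ici 0) := by
      ext z; simp [Set.mem_preimage, hr0 z]
    rw [hAeq]
    calc μ (r ⁻¹' (A ∩ Set.Ici 0))
        ≤ ENNReal.ofReal C₀ * ∫⁻ ρ in A ∩ Set.Ici 0, ENNReal.ofReal ρ :=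
          hμ _ (hA.inter measurableSet_Ici) Set.inter_subset_right
      _ ≤ ENNReal.ofReal C₀ * ∫⁻ ρ in A, ENNReal.ofReal ρ := by
          gcongr
          exact Set.inter_subset_left
      _ = (ENNReal.ofReal C₀ • (volume.withDensity fun ρ => ENNReal.ofReal ρ)) A := by
          rw [Measure.smul_apply, smul_eq_mul, withDensity_apply _ hA]
  have step1 : ∫⁻ z in {z : Z | r z ≤ b}, ENNReal.ofReal (((1 + r z) ^ 2)⁻¹) ∂μ
      = ∫⁻ ρ, B.indicator g ρ ∂(Measure.map r μ) := by
    rw [hpre, ← lintegral_indicator (hr hBm)]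
    have hind : ∀ z, (r ⁻¹' B).indicator (fun z => ENNReal.ofReal (((1 + r z) ^ 2)⁻¹)) z
        = B.indicator g (r z) := by
      intro z
      by_cases hz : r z ∈ B <;> simp [Set.indicator, hz, Set.mem_preimage, hg]
    simp_rw [hind]
    exact (lintegral_map (hgm.indicator hBm) hr).symm
  have step2 : ∫⁻ ρ, B.indicator g ρ ∂(Measure.map r μ)
      ≤ ENNReal.ofReal C₀ * ∫⁻ ρ in B, ENNReal.ofReal ρ * g ρ := by
    calc ∫⁻ ρ, B.indicator g ρ ∂(Measure.map r μ)
        ≤ ∫⁻ ρ, B.indicator g ρ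
            ∂(ENNReal.ofReal C₀ • (volume.withDensity fun ρ => ENNReal.ofReal ρ)) :=
          lintegral_mono' hmap le_rfl
      _ = ENNReal.ofReal C₀ * ∫⁻ ρ, B.indicator g ρ
            ∂(volume.withDensity fun ρ => ENNReal.ofReal ρ) := lintegral_smul_measure _ _
      _ = ENNReal.ofReal C₀ * ∫⁻ ρ, (ENNReal.ofReal ρ) * B.indicator g ρ := by
          rw [lintegral_withDensity_eq_lintegral_mul _ ENNReal.measurable_ofReal
            (hgm.indicator hBm)]
          rfl
      _ = ENNReal.ofReal C₀ * ∫⁻ ρ in B, ENNReal.ofReal ρ * g ρ := by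
          rw [← lintegral_indicator hBm]
          congr 1
          apply lintegral_congr
          intro ρ
          by_cases hρ : ρ ∈ B <;> simp [Set.indicator, hρ]
  have step3 : ∫⁻ ρ in B, ENNReal.ofReal ρ * g ρ ≤ ENNReal.ofReal (1 + Real.log b) := by
    have hsub : B ⊆ Set.Icc 0 1 ∪ Set.Ioc 1 b := by
      intro ρ hρ
      rcases le_or_gt ρ 1 with h | h
      · exact Or.inl ⟨hρ.1, h⟩
      · exact Or.inr ⟨h, hρ.2⟩
    calc ∫⁻ ρ in B, ENNReal.ofReal ρ * g ρ
        ≤ ∫⁻ ρ in Set.Icc 0 1 ∪ Set.Ioc 1 b, ENNReal.ofReal ρ * g ρ :=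
          lintegral_mono_set hsub
      _ ≤ (∫⁻ ρ in Set.Icc (0:ℝ) 1, ENNReal.ofReal ρ * g ρ) +
          ∫⁻ ρ in Set.Ioc (1:ℝ) b, ENNReal.ofReal ρ * g ρ := by
          rw [← lintegral_add_measure]
          exact lintegral_mono' (Measure.restrict_union_le _ _) le_rfl
      _ ≤ (∫⁻ _ρ in Set.Icc (0:ℝ) 1, (1:ENNReal)) +
          ∫⁻ ρ in Set.Ioc (1:ℝ) b, ENNReal.ofReal ρ⁻¹ := by
          gcongr ?_ + ?_
          · refine lintegral_mono_ae ((ae_restrict_mem measurableSet_Icc).mono fun ρ hρ => ?_)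
            rw [hg, ← ENNReal.ofReal_mul hρ.1, ← ENNReal.ofReal_one]
            refine ENNReal.ofReal_le_ofReal ?_
            rw [← div_eq_mul_inv, div_le_one (by nlinarith [hρ.1])]
            nlinarith [hρ.1]
          · refine lintegral_mono_ae ((ae_restrict_mem measurableSet_Ioc).mono fun ρ hρ => ?_)
            have hρ0 : (0:ℝ) < ρ := lt_trans zero_lt_one hρ.1
            rw [hg, ← ENNReal.ofReal_mul hρ0.le]
            refine ENNReal.ofReal_le_ofReal ?_
            calc ρ * ((1 + ρ) ^ 2)⁻¹ ≤ ρ * (ρ ^ 2)⁻¹ := by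
                  gcongr
                  nlinarith
              _ = ρ⁻¹ := by field_simp
      _ ≤ ENNReal.ofReal 1 + ENNReal.ofReal (Real.log b) := by
          rw [int3 hb]
          gcongr
          rw [setLIntegral_one, Real.volume_Icc]
          exact ENNReal.ofReal_le_ofReal (by norm_num)
      _ = ENNReal.ofReal (1 + Real.log b) := by
          rw [← ENNReal.ofReal_add (by norm_num) (Real.log_nonneg hb)]
  calc ∫⁻ z in {z : Z | r z ≤ b}, ENNReal.ofReal (((1 + r z) ^ 2)⁻¹) ∂μ
      = ∫⁻ ρ, B.indicator g ρ ∂(Measure.map r μ) := step1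
    _ ≤ ENNReal.ofReal C₀ * ∫⁻ ρ in B, ENNReal.ofReal ρ * g ρ := step2
    _ ≤ ENNReal.ofReal C₀ * ENNReal.ofReal (1 + Real.log b) := by gcongr

/-- Lemma 6.4 (abstract form): Gaussian integrals against the increment
`h(z,v) = q₁(z,v) − q₁(z,0)` of the subleading parametrix coefficient grow at
most logarithmically. -/
theorem stmt_4 (C₀ C : ℝ) (hC₀ : 0 ≤ C₀) (hC : 0 ≤ C) :
    ∃ C' : ℝ, ∀ (Z : Type) [MeasurableSpace Z] (μ : Measure Z)
      (r : Z → ℝ) (_ : Measurable r) (_ : ∀ z, 0 ≤ r z)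
      (_ : ∀ A : Set ℝ, MeasurableSet A → A ⊆ Set.Ici 0 →
        μ (r ⁻¹' A) ≤ ENNReal.ofReal C₀ * ∫⁻ ρ in A, ENNReal.ofReal ρ)
      (h : Z × ℂ → ℂ) (_ : Measurable h)
      (_ : ∀ (z : Z) (v : ℂ), ‖v‖ ≤ r z + 1 →
        ‖h (z, v)‖ ≤ C * ‖v‖ * ((1 + r z) ^ 3)⁻¹)
      (T : ℝ), 1 < T →
      (∫⁻ s in Set.Ioo (0 : ℝ) T, ENNReal.ofReal s⁻¹ *
          ∫⁻ z in {z : Z | r z ≤ Real.sqrt T},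
            ENNReal.ofReal ‖∫ v in {v : ℂ | ‖v‖ ≤ r z + 1},
              (s⁻¹ * Real.exp (-‖v‖ ^ 2 / s)) • h (z, v)‖ ∂μ) ≤
        ENNReal.ofReal (C' * (Real.log T + 1)) := by
  refine ⟨100 * C * C₀, ?_⟩
  intro Z _ μ r hr hr0 hμ h hmeas hbound T hT
  have hT0 : (0:ℝ) < T := lt_trans zero_lt_one hT
  have hsT1 : (1:ℝ) < Real.sqrt T := by
    rw [show (1:ℝ) = Real.sqrt 1 by simp]
    exact Real.sqrt_lt_sqrt zero_le_one hT
  set ST : Set Z := {z : Z | r z ≤ Real.sqrt T} with hSTdef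
  -- finiteness of μ ST
  have hSTpre : ST = r ⁻¹' (Set.Icc 0 (Real.sqrt T)) := by
    ext z; simp [hSTdef, hr0 z]
  have hfin : μ ST < ⊤ := by
    rw [hSTpre]
    refine lt_of_le_of_lt (hμ _ measurableSet_Icc (fun x hx => hx.1)) ?_
    refine ENNReal.mul_lt_top ENNReal.ofReal_lt_top ?_
    refine lt_of_le_of_lt (lintegral_mono_ae
      ((ae_restrict_mem measurableSet_Icc).mono fun ρ hρ =>
        ENNReal.ofReal_le_ofReal hρ.2)) ?_
    rw [setLIntegral_const]
    refine ENNReal.mul_lt_top ENNReal.ofReal_lt_top ?_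
    rw [Real.volume_Icc]
    exact ENNReal.ofReal_lt_top
  haveI : IsFiniteMeasure (μ.restrict ST) :=
    ⟨by rw [Measure.restrict_apply_univ]; exact hfin⟩
  -- the majorant
  set Φ : ℝ → Z → ENNReal := fun s z =>
    ENNReal.ofReal (C * ((1 + r z) ^ 3)⁻¹) *
      ENNReal.ofReal (s⁻¹ * (s⁻¹ * min (4 * (r z + 1) ^ 3) (9 * (s * Real.sqrt s)))) with hΦdef
  have hΦm : Measurable (Function.uncurry Φ) := by
    refine Measurable.mul (f := fun p : ℝ × Z => ENNReal.ofReal (C * ((1 + r p.2) ^ 3)⁻¹))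
      (g := fun p : ℝ × Z => ENNReal.ofReal (p.1⁻¹ * (p.1⁻¹ * min (4 * (r p.2 + 1) ^ 3)
        (9 * (p.1 * Real.sqrt p.1))))) ?_ ?_
    · apply ENNReal.measurable_ofReal.comp
      exact measurable_const.mul
        (((measurable_const.add (hr.comp measurable_snd)).pow_const 3).inv)
    · apply ENNReal.measurable_ofReal.comp
      refine Measurable.mul measurable_fst.inv (Measurable.mul measurable_fst.inv ?_)
      refine Measurable.min ?_ ?_
      · exact (((hr.comp measurable_snd).add_const 1).pow_const 3).const_mul 4
      · exact (measurable_fst.mul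
          (Real.continuous_sqrt.measurable.comp measurable_fst)).const_mul 9
  -- step A : bound by the double integral of Φ
  have stepA : (∫⁻ s in Set.Ioo (0 : ℝ) T, ENNReal.ofReal s⁻¹ *
          ∫⁻ z in ST,
            ENNReal.ofReal ‖∫ v in {v : ℂ | ‖v‖ ≤ r z + 1},
              (s⁻¹ * Real.exp (-‖v‖ ^ 2 / s)) • h (z, v)‖ ∂μ)
      ≤ ∫⁻ s in Set.Ioo (0:ℝ) T, ∫⁻ z in ST, Φ s z ∂μ := by
    refine lintegral_mono_ae ((ae_restrict_mem measurableSet_Ioo).mono fun s hs => ?_)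
    have hs0 : 0 < s := hs.1
    rw [← lintegral_const_mul' _ _ ENNReal.ofReal_ne_top]
    refine lintegral_mono fun z => ?_
    have hkey := inner_bound hC hs0 (hr0 z) (fun v => h (z, v)) (hbound z)
    calc ENNReal.ofReal s⁻¹ *
          ENNReal.ofReal ‖∫ v in {v : ℂ | ‖v‖ ≤ r z + 1},
            (s⁻¹ * Real.exp (-‖v‖ ^ 2 / s)) • h (z, v)‖
        = ENNReal.ofReal (s⁻¹ * ‖∫ v in {v : ℂ | ‖v‖ ≤ r z + 1},
            (s⁻¹ * Real.exp (-‖v‖ ^ 2 / s)) • h (z, v)‖) := by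
          rw [ENNReal.ofReal_mul (inv_nonneg.2 hs0.le)]
      _ ≤ ENNReal.ofReal (s⁻¹ * (C * ((1 + r z) ^ 3)⁻¹ * s⁻¹ *
            min (4 * (r z + 1) ^ 3) (9 * (s * Real.sqrt s)))) := by
          exact ENNReal.ofReal_le_ofReal (mul_le_mul_of_nonneg_left hkey (inv_nonneg.2 hs0.le))
      _ = Φ s z := by
          simp only [hΦdef]
          rw [← ENNReal.ofReal_mul (mul_nonneg hC (inv_nonneg.2 (pow_nonneg (by linarith [hr0 z]) 3)))]
          congr 1
          ring
  -- step B : swap the integrals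
  have stepB : ∫⁻ s in Set.Ioo (0:ℝ) T, ∫⁻ z in ST, Φ s z ∂μ
      = ∫⁻ z in ST, (∫⁻ s in Set.Ioo (0:ℝ) T, Φ s z) ∂μ :=
    lintegral_lintegral_swap hΦm.aemeasurable
  -- step C : inner s-integral
  have stepC : ∀ z : Z, ∫⁻ s in Set.Ioo (0:ℝ) T, Φ s z
      ≤ ENNReal.ofReal (22 * C) * ENNReal.ofReal (((1 + r z) ^ 2)⁻¹) := by
    intro z
    have h1r : (0:ℝ) < 1 + r z := by have := hr0 z; linarith
    rw [hΦdef]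
    simp only
    rw [lintegral_const_mul' _ _ ENNReal.ofReal_ne_top]
    calc ENNReal.ofReal (C * ((1 + r z) ^ 3)⁻¹) *
          ∫⁻ s in Set.Ioo (0:ℝ) T, ENNReal.ofReal
            (s⁻¹ * (s⁻¹ * min (4 * (r z + 1) ^ 3) (9 * (s * Real.sqrt s))))
        ≤ ENNReal.ofReal (C * ((1 + r z) ^ 3)⁻¹) * ENNReal.ofReal (22 * (r z + 1)) := by
          gcongr
          exact s_integral (by have := hr0 z; linarith) hT0
      _ = ENNReal.ofReal (22 * C) * ENNReal.ofReal (((1 + r z) ^ 2)⁻¹) := by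
          rw [← ENNReal.ofReal_mul (by positivity), ← ENNReal.ofReal_mul (by norm_num [hC])]
          congr 1
          field_simp
          ring
  -- step D : z-integral
  have stepD : ∫⁻ z in ST, ENNReal.ofReal (((1 + r z) ^ 2)⁻¹) ∂μ
      ≤ ENNReal.ofReal C₀ * ENNReal.ofReal (1 + Real.log (Real.sqrt T)) :=
    z_integral hC₀ μ r hr hr0 hμ hsT1.le
  -- assemble
  calc (∫⁻ s in Set.Ioo (0 : ℝ) T, ENNReal.ofReal s⁻¹ *
          ∫⁻ z in ST,
            ENNReal.ofReal ‖∫ v in {v : ℂ | ‖v‖ ≤ r z + 1},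
              (s⁻¹ * Real.exp (-‖v‖ ^ 2 / s)) • h (z, v)‖ ∂μ)
      ≤ ∫⁻ s in Set.Ioo (0:ℝ) T, ∫⁻ z in ST, Φ s z ∂μ := stepA
    _ = ∫⁻ z in ST, (∫⁻ s in Set.Ioo (0:ℝ) T, Φ s z) ∂μ := stepB
    _ ≤ ∫⁻ z in ST, ENNReal.ofReal (22 * C) * ENNReal.ofReal (((1 + r z) ^ 2)⁻¹) ∂μ :=
        lintegral_mono fun z => stepC z
    _ = ENNReal.ofReal (22 * C) * ∫⁻ z in ST, ENNReal.ofReal (((1 + r z) ^ 2)⁻¹) ∂μ :=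
        lintegral_const_mul' _ _ ENNReal.ofReal_ne_top
    _ ≤ ENNReal.ofReal (22 * C) *
          (ENNReal.ofReal C₀ * ENNReal.ofReal (1 + Real.log (Real.sqrt T))) := by gcongr
    _ ≤ ENNReal.ofReal (100 * C * C₀ * (Real.log T + 1)) := by
        rw [← ENNReal.ofReal_mul (by positivity), ← ENNReal.ofReal_mul (by positivity)]
        refine ENNReal.ofReal_le_ofReal ?_
        rw [Real.log_sqrt hT0.le]
        have hlog : 0 ≤ Real.log T := Real.log_nonneg hT.le
        have hCC : 0 ≤ C * C₀ := mul_nonneg hC hC₀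
        nlinarith
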